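/- Suppose given a commuting square of C*-algebras with exact rows 0 → I → A → A/I → 0 and 0 → J → B → B/J → 0, where the top row admits a completely positive splitting s : A/I → A, and ρ : A → B is a strict completely positive map with ρ(I) ⊆ J. Then the induced map ρ̃ : A/I → B/J, ρ̃(a + I) = ρ(a) + J, is a well-defined strict completely positive map. -/

import Mathlib

noncomputable section

open Filter Topology

universe u

/-- A bundled right Hilbert C*-module structure over a (possibly non-unital)
C*-algebra `B` on a complete normed complex vector space `X`.  The fields record
the right `B`-action, the `B`-valued inner product, and their standard axioms,
including positivity of inner products and compatibility of the norm. -/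
structure HilbertModule (B : Type u) (X : Type u)
    [NonUnitalCStarAlgebra B] [NormedAddCommGroup X] [NormedSpace ℂ X] [CompleteSpace X] :
    Type u where
  smulR : X → B → X
  inner : X → X → B
  smulR_add : ∀ (x : X) (b c : B), smulR x (b + c) = smulR x b + smulR x c
  add_smulR : ∀ (x y : X) (b : B), smulR (x + y) b = smulR x b + smulR y b
  smulR_mul : ∀ (x : X) (b c : B), smulR x (b * c) = smulR (smulR x b) c
  smulC_smulR : ∀ (c : ℂ) (x : X) (b : B), smulR (c • x) b = c • smulR x b
  inner_add_left : ∀ x y z : X, inner (x + y) z = inner x z + inner y z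
  inner_add_right : ∀ x y z : X, inner x (y + z) = inner x y + inner x z
  inner_smulR_right : ∀ (x y : X) (b : B), inner x (smulR y b) = inner x y * b
  inner_smulC_right : ∀ (c : ℂ) (x y : X), inner x (c • y) = c • inner x y
  star_inner : ∀ x y : X, star (inner x y) = inner y x
  inner_self_pos : ∀ x : X, ∃ b : B, inner x x = star b * b
  norm_inner_self : ∀ x : X, ‖x‖ ^ 2 = ‖inner x x‖

/-- `T : X → Y` and `S : Y → X` are mutually adjoint operators between
right Hilbert `B`-modules. -/
def HilbertModule.IsAdjointPair {B X Y : Type u} [NonUnitalCStarAlgebra B]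
    [NormedAddCommGroup X] [NormedSpace ℂ X] [CompleteSpace X]
    [NormedAddCommGroup Y] [NormedSpace ℂ Y] [CompleteSpace Y]
    (hX : HilbertModule B X) (hY : HilbertModule B Y)
    (T : X → Y) (S : Y → X) : Prop :=
  ∀ (x : X) (y : Y), hY.inner (T x) y = hX.inner x (S y)

/-- Positivity in a C*-algebra, expressed as being of the form `star c * c`. -/
def IsPositiveElem {B : Type u} [NonUnitalCStarAlgebra B] (b : B) : Prop :=
  ∃ c : B, b = star c * c

/-- Positivity of a matrix over a C*-algebra. -/
def MatrixIsPositive {A : Type u} [NonUnitalCStarAlgebra A] {n : ℕ}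
    (M : Matrix (Fin n) (Fin n) A) : Prop :=
  ∃ N : Matrix (Fin n) (Fin n) A, M = N.conjTranspose * N

/-- A sequential (the algebras in question are separable) approximate unit. -/
structure IsApproxUnit {A : Type u} [NonUnitalCStarAlgebra A] (e : ℕ → A) : Prop where
  pos : ∀ n, IsPositiveElem (e n)
  norm_le_one : ∀ n, ‖e n‖ ≤ 1
  tendsto_mul_left : ∀ a : A, Tendsto (fun n => e n * a) atTop (𝓝 a)
  tendsto_mul_right : ∀ a : A, Tendsto (fun n => a * e n) atTop (𝓝 a)

/-- A completely positive map between C*-algebras: a linear map sending positive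
matrices to positive matrices at every matrix level. -/
structure IsCPMap {A B : Type u} [NonUnitalCStarAlgebra A] [NonUnitalCStarAlgebra B]
    (ρ : A → B) : Prop where
  map_add : ∀ a a', ρ (a + a') = ρ a + ρ a'
  map_smul : ∀ (c : ℂ) (a : A), ρ (c • a) = c • ρ a
  map_pos_matrix : ∀ (n : ℕ) (M : Matrix (Fin n) (Fin n) A),
    MatrixIsPositive M → MatrixIsPositive (M.map ρ)

/-- A map between C*-algebras is strict if some approximate unit of the domain is
sent to a strictly Cauchy net in the multiplier algebra of the codomain. -/
def IsStrictMap {A B : Type u} [NonUnitalCStarAlgebra A] [NonUnitalCStarAlgebra B]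
    (ρ : A → B) : Prop :=
  ∃ e : ℕ → A, IsApproxUnit e ∧
    ∀ b : B, CauchySeq (fun n => ρ (e n) * b) ∧ CauchySeq (fun n => b * ρ (e n))

/-- A completely positive map from `A` into the adjointable operators on a
right Hilbert `B`-module `X`. -/
structure IsCPAction {A B X : Type u} [NonUnitalCStarAlgebra A] [NonUnitalCStarAlgebra B]
    [NormedAddCommGroup X] [NormedSpace ℂ X] [CompleteSpace X]
    (hX : HilbertModule B X) (ρ : A → X → X) : Prop where
  map_add : ∀ a a' x, ρ (a + a') x = ρ a x + ρ a' x
  map_smul : ∀ (c : ℂ) (a : A) x, ρ (c • a) x = c • ρ a x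
  add_right : ∀ a x y, ρ a (x + y) = ρ a x + ρ a y
  adjointable : ∀ a, ∃ S, HilbertModule.IsAdjointPair hX hX (ρ a) S
  pos : ∀ (n : ℕ) (M : Matrix (Fin n) (Fin n) A), MatrixIsPositive M →
    ∀ x : Fin n → X, IsPositiveElem (∑ i, ∑ j, hX.inner (x i) (ρ (M i j) (x j)))

/-- Strictness for a completely positive map into the adjointable operators on a
Hilbert module: some approximate unit is mapped to a strictly Cauchy net. -/
def IsStrictAction {A B X : Type u} [NonUnitalCStarAlgebra A] [NonUnitalCStarAlgebra B]
    [NormedAddCommGroup X] [NormedSpace ℂ X] [CompleteSpace X]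
    (hX : HilbertModule B X) (ρ : A → X → X) : Prop :=
  ∃ e : ℕ → A, IsApproxUnit e ∧ ∃ S : ℕ → X → X,
    (∀ n, HilbertModule.IsAdjointPair hX hX (ρ (e n)) (S n)) ∧
    ∀ x, CauchySeq (fun n => ρ (e n) x) ∧ CauchySeq (fun n => S n x)

/-- A left action of `A` on a Hilbert `B`-module by adjointable operators via a
*-homomorphism, i.e. the structure of an `A`–`B`-correspondence. -/
structure IsCorrespondenceAction {A B X : Type u} [NonUnitalCStarAlgebra A]
    [NonUnitalCStarAlgebra B]
    [NormedAddCommGroup X] [NormedSpace ℂ X] [CompleteSpace X]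
    (hX : HilbertModule B X) (φ : A → X → X) : Prop where
  map_add : ∀ a a' x, φ (a + a') x = φ a x + φ a' x
  map_mul : ∀ a a' x, φ (a * a') x = φ a (φ a' x)
  map_smul : ∀ (c : ℂ) (a : A) x, φ (c • a) x = c • φ a x
  add_right : ∀ a x y, φ a (x + y) = φ a x + φ a y
  star_adjoint : ∀ a, HilbertModule.IsAdjointPair hX hX (φ a) (φ (star a))

/-- The trivial right Hilbert `B`-module structure on `B` itself. -/
def trivHM (B : Type u) [NonUnitalCStarAlgebra B] : HilbertModule B B where
  smulR b c := b * c
  inner b c := star b * c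
  smulR_add := by intros; simp [mul_add]
  add_smulR := by intros; simp [add_mul]
  smulR_mul := by intros; simp [mul_assoc]
  smulC_smulR := by intros; simp [smul_mul_assoc]
  inner_add_left := by intros; simp [star_add, add_mul]
  inner_add_right := by intros; simp [mul_add]
  inner_smulR_right := by intros; simp [mul_assoc]
  inner_smulC_right := by intros; simp [mul_smul_comm]
  star_inner := by intros; simp [star_mul, mul_assoc]
  inner_self_pos := fun b => ⟨b, rfl⟩
  norm_inner_self := by intro b; rw [CStarRing.norm_star_mul_self, pow_two]

/-! The induced map is the factorization of `q_B ∘ ρ` through the surjection `q_A`, which exists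
because `ρ` is additive and maps `ker q_A` into `ker q_B`. Complete positivity and strictness both
pass through surjective *-homomorphisms: a positive matrix `Nᴴ * N` over the quotient lifts by
lifting `N` entrywise, and an approximate unit and strictly Cauchy sequences are pushed forward by
the contractive map `q`. -/

section

variable {A B C D : Type u} [NonUnitalCStarAlgebra A] [NonUnitalCStarAlgebra B]
  [NonUnitalCStarAlgebra C] [NonUnitalCStarAlgebra D]

theorem IsCPMap.map_sub {ρ : A → B} (hρ : IsCPMap ρ) (a a' : A) : ρ (a - a') = ρ a - ρ a' :=
  eq_sub_of_add_eq (by rw [← hρ.map_add, sub_add_cancel])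

theorem IsCPMap.comp {ρ : A → B} {σ : B → C} (hσ : IsCPMap σ) (hρ : IsCPMap ρ) :
    IsCPMap (σ ∘ ρ) where
  map_add a a' := by simp only [Function.comp_apply, hρ.map_add, hσ.map_add]
  map_smul c a := by simp only [Function.comp_apply, hρ.map_smul, hσ.map_smul]
  map_pos_matrix n M hM := by
    simpa only [Matrix.map_map] using hσ.map_pos_matrix n _ (hρ.map_pos_matrix n M hM)

theorem MatrixIsPositive.map {n : ℕ} {M : Matrix (Fin n) (Fin n) A} (hM : MatrixIsPositive M)
    (q : A →⋆ₙₐ[ℂ] B) : MatrixIsPositive (M.map q) := by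
  obtain ⟨N, rfl⟩ := hM
  exact ⟨N.map q, by rw [Matrix.map_mul, Matrix.conjTranspose_map q (map_star q)]⟩

theorem NonUnitalStarAlgHom.isCPMap (q : A →⋆ₙₐ[ℂ] B) : IsCPMap q where
  map_add := map_add q
  map_smul := map_smul q
  map_pos_matrix _ _ hM := hM.map q

theorem IsCPMap.of_comp_surjective {q : A →⋆ₙₐ[ℂ] B} (hq : Function.Surjective q) {ρ : B → C}
    (hρq : IsCPMap (ρ ∘ q)) : IsCPMap ρ where
  map_add b b' := by
    obtain ⟨⟨a, rfl⟩, ⟨a', rfl⟩⟩ := And.intro (hq b) (hq b')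
    rw [← _root_.map_add]
    exact hρq.map_add a a'
  map_smul c b := by
    obtain ⟨a, rfl⟩ := hq b
    rw [← _root_.map_smul]
    exact hρq.map_smul c a
  map_pos_matrix n M := by
    rintro ⟨N, rfl⟩
    obtain ⟨L, rfl⟩ : ∃ L : Matrix (Fin n) (Fin n) A, L.map q = N :=
      ⟨N.map (Function.surjInv hq), by ext; simp only [Matrix.map_apply, Function.surjInv_eq]⟩
    rw [← Matrix.conjTranspose_map q (map_star q), ← Matrix.map_mul, Matrix.map_map]
    exact hρq.map_pos_matrix n _ ⟨L, rfl⟩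

theorem NonUnitalStarAlgHom.uniformContinuous (q : A →⋆ₙₐ[ℂ] B) : UniformContinuous q :=
  (AddMonoidHomClass.lipschitz_of_bound q 1 fun a => by
    simpa only [one_mul] using NonUnitalStarAlgHom.norm_apply_le q a).uniformContinuous

theorem IsApproxUnit.map_of_surjective {e : ℕ → A} (he : IsApproxUnit e) {q : A →⋆ₙₐ[ℂ] B}
    (hq : Function.Surjective q) : IsApproxUnit (q ∘ e) where
  pos n := by
    obtain ⟨c, hc⟩ := he.pos n
    exact ⟨q c, by rw [Function.comp_apply, hc, map_mul, map_star]⟩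
  norm_le_one n := (NonUnitalStarAlgHom.norm_apply_le q (e n)).trans (he.norm_le_one n)
  tendsto_mul_left b := by
    obtain ⟨a, rfl⟩ := hq b
    simpa only [Function.comp_def, map_mul] using
      (q.uniformContinuous.continuous.tendsto a).comp (he.tendsto_mul_left a)
  tendsto_mul_right b := by
    obtain ⟨a, rfl⟩ := hq b
    simpa only [Function.comp_def, map_mul] using
      (q.uniformContinuous.continuous.tendsto a).comp (he.tendsto_mul_right a)

theorem IsStrictMap.starAlgHom_comp {ρ : A → B} (hρ : _root_.IsStrictMap ρ) {q : B →⋆ₙₐ[ℂ] C}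
    (hq : Function.Surjective q) : _root_.IsStrictMap (q ∘ ρ) := by
  obtain ⟨e, he, hcauchy⟩ := hρ
  refine ⟨e, he, fun c => ?_⟩
  obtain ⟨b, rfl⟩ := hq c
  simp only [Function.comp_apply, ← map_mul]
  exact ⟨q.uniformContinuous.comp_cauchySeq (hcauchy b).1,
    q.uniformContinuous.comp_cauchySeq (hcauchy b).2⟩

theorem IsStrictMap.of_comp_surjective {q : A →⋆ₙₐ[ℂ] B} (hq : Function.Surjective q)
    {ρ : B → C} (hρq : _root_.IsStrictMap (ρ ∘ q)) : _root_.IsStrictMap ρ := by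
  obtain ⟨e, he, hcauchy⟩ := hρq
  exact ⟨q ∘ e, he.map_of_surjective hq, hcauchy⟩

theorem IsCPMap.factorsThrough {ρ : A → C} (hρ : IsCPMap ρ) {qA : A →⋆ₙₐ[ℂ] B}
    {qB : C →⋆ₙₐ[ℂ] D} (hker : ∀ a : A, qA a = 0 → qB (ρ a) = 0) :
    Function.FactorsThrough (qB ∘ ρ) qA := fun a a' h => by
  have := hker (a - a') (by rw [_root_.map_sub, h, sub_self])
  rwa [hρ.map_sub, _root_.map_sub, sub_eq_zero] at this

end

theorem quotient_positive_map_general {A B A' B' : Type u}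
    [NonUnitalCStarAlgebra A] [NonUnitalCStarAlgebra B]
    [NonUnitalCStarAlgebra A'] [NonUnitalCStarAlgebra B']
    (qA : A →⋆ₙₐ[ℂ] A') (hqA : Function.Surjective qA)
    (qB : B →⋆ₙₐ[ℂ] B') (hqB : Function.Surjective qB)
    (ρ : A → B) (hρcp : IsCPMap ρ) (hρstrict : _root_.IsStrictMap ρ)
    -- `ρ(I) ⊆ J`, where `I = ker q_A` and `J = ker q_B`
    (hker : ∀ a : A, qA a = 0 → qB (ρ a) = 0) :
    ∃ ρ' : A' → B',
      (∀ a : A, ρ' (qA a) = qB (ρ a)) ∧ IsCPMap ρ' ∧ _root_.IsStrictMap ρ' := by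
  have hfactor : Function.FactorsThrough (qB ∘ ρ) qA := hρcp.factorsThrough hker
  set ρ' : A' → B' := Function.extend qA (qB ∘ ρ) 0
  have hcomp : ρ' ∘ qA = qB ∘ ρ := hfactor.extend_comp (0 : A' → B')
  refine ⟨ρ', hfactor.extend_apply 0, ?_, ?_⟩
  · exact IsCPMap.of_comp_surjective hqA (by rw [hcomp]; exact qB.isCPMap.comp hρcp)
  · exact IsStrictMap.of_comp_surjective hqA (by rw [hcomp]; exact hρstrict.starAlgHom_comp hqB)

/-- Given a commuting square of C*-algebras with exact rows
`0 → I → A → A/I → 0` and `0 → J → B → B/J → 0` (presented via surjective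
*-homomorphisms `q_A : A → A/I`, `q_B : B → B/J`), where the top row admits a
completely positive splitting `s : A/I → A`, and a strict completely positive
map `ρ : A → B` with `ρ(I) ⊆ J`, the induced map `ρ̃ : A/I → B/J`,
`ρ̃(a + I) = ρ(a) + J`, is a well-defined strict completely positive map. -/
theorem quotient_positive_map {A B A' B' : Type u}
    [NonUnitalCStarAlgebra A] [NonUnitalCStarAlgebra B]
    [NonUnitalCStarAlgebra A'] [NonUnitalCStarAlgebra B']
    (qA : A →⋆ₙₐ[ℂ] A') (hqA : Function.Surjective qA)
    (qB : B →⋆ₙₐ[ℂ] B') (hqB : Function.Surjective qB)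
    (ρ : A → B) (hρcp : IsCPMap ρ) (hρstrict : _root_.IsStrictMap ρ)
    -- `ρ(I) ⊆ J`, where `I = ker q_A` and `J = ker q_B`
    (hker : ∀ a : A, qA a = 0 → qB (ρ a) = 0)
    -- completely positive splitting of the top row
    (s : A' → A) (hscp : IsCPMap s) (hsplit : ∀ a' : A', qA (s a') = a') :
    ∃ ρ' : A' → B',
      (∀ a : A, ρ' (qA a) = qB (ρ a)) ∧ IsCPMap ρ' ∧ _root_.IsStrictMap ρ' :=
  quotient_positive_map_general qA hqA qB hqB ρ hρcp hρstrict hker
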